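/- arXiv:0711.0041 — 3 statements merged into one kernel-verified Lean document; each statement's English description precedes it below -/
import Mathlib

section
/- Let m > 0 and ω ∈ ℝ with ω² ≥ m². Suppose φ : ℝ → ℂ is continuous on ℝ, square-integrable over ℝ, and for every x ≠ 0 the function φ is twice differentiable at x with second derivative satisfying φ''(x) = (m² − ω²)·φ(x). Then φ is identically zero. (In particular, the Klein–Gordon equation with a point oscillator at the origin has no nonzero solitary waves φ(x)e^{−iωt} with |ω| ≥ m.) -/
/-!
On a half-line write the equation as `φ'' = -k²φ` with `k ≥ 0`. For `k > 0` the functions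
`u = φ' + ikφ` and `v = φ' - ikφ` satisfy `u' = iku` and `v' = -ikv`, so `|u|` and `|v|` are
constant, and the quarter-period shift `d = π / (2k)` turns `u, v` into `iu, -iv`. By the
parallelogram law `4k² (|φ x|² + |φ (x + d)|²) = 2 (|u|² + |v|²)` is then a constant, which is
integrable on a half-line only if it vanishes. For `k = 0`, `φ` is affine and
`φ (x + 1) - φ x` is its slope, so the same argument kills first the slope and then `φ`.
Both half-lines are handled this way (the left one after reflection), and continuity fills
in the origin.
-/

open MeasureTheory Set Complex Real

def SecondDerivEqMulOn (c : ℝ) (φ φ' : ℝ → ℂ) (s : Set ℝ) : Prop :=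
  ∀ x ∈ s, HasDerivAt φ (φ' x) x ∧ HasDerivAt φ' (c * φ x) x

theorem HasDerivAt.comp_neg {𝕜 E : Type*} [NontriviallyNormedField 𝕜] [NormedAddCommGroup E]
    [NormedSpace 𝕜 E] {f : 𝕜 → E} {f' : E} {x : 𝕜} (hf : HasDerivAt f f' (-x)) :
    HasDerivAt (fun y ↦ f (-y)) (-f') x := by
  simpa [Function.comp_def] using hf.scomp x (hasDerivAt_neg x)

theorem SecondDerivEqMulOn.comp_neg {c : ℝ} {φ φ' : ℝ → ℂ} {s : Set ℝ}
    (h : SecondDerivEqMulOn c φ φ' s) :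
    SecondDerivEqMulOn c (fun x ↦ φ (-x)) (fun x ↦ -φ' (-x)) (-s) := fun x hx ↦
  ⟨(h (-x) hx).1.comp_neg, by simpa using (h (-x) hx).2.comp_neg.fun_neg⟩

section HalfLine

variable {a : ℝ}

theorem MeasureTheory.IntegrableOn.nonpos_of_forall_le {g : ℝ → ℝ} {ε : ℝ}
    (hg : IntegrableOn g (Ioi a)) (h : ∀ x ∈ Ioi a, ε ≤ g x) : ε ≤ 0 := by
  by_contra! hε
  have hconst : IntegrableOn (fun _ ↦ ε) (Ioi a) :=
    hg.mono' aestronglyMeasurable_const <| (ae_restrict_iff' measurableSet_Ioi).2 <|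
      .of_forall fun x hx ↦ by rw [Real.norm_of_nonneg hε.le]; exact h x hx
  simp [integrableOn_const_iff, hε.ne', Real.volume_Ioi] at hconst

theorem MeasureTheory.IntegrableOn.comp_add_right_Ioi {E : Type*} [NormedAddCommGroup E]
    {g : ℝ → E} {d : ℝ} (hg : IntegrableOn g (Ioi a)) (hd : 0 ≤ d) :
    IntegrableOn (fun x ↦ g (x + d)) (Ioi a) := by
  have h := (measurePreserving_add_right volume d).integrableOn_comp_preimage
    (Homeomorph.addRight d).measurableEmbedding (f := g) (s := Ioi (a + d))
  rw [preimage_add_const_Ioi, add_sub_cancel_right] at h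
  exact h.2 (hg.mono_set (Ioi_subset_Ioi (le_add_of_nonneg_right hd)))

theorem MeasureTheory.IntegrableOn.nonpos_of_forall_le_add_comp_add {g : ℝ → ℝ} {d ε : ℝ}
    (hg : IntegrableOn g (Ioi a)) (hd : 0 ≤ d) (h : ∀ x ∈ Ioi a, ε ≤ g x + g (x + d)) :
    ε ≤ 0 :=
  (hg.add (hg.comp_add_right_Ioi hd)).nonpos_of_forall_le h

theorem eq_of_hasDerivAt_zero_Ioi {E : Type*} [NormedAddCommGroup E] [NormedSpace ℝ E]
    {f : ℝ → E} (hf : ∀ x ∈ Ioi a, HasDerivAt f 0 x) {x y : ℝ} (hx : x ∈ Ioi a)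
    (hy : y ∈ Ioi a) : f x = f y :=
  isOpen_Ioi.is_const_of_deriv_eq_zero isPreconnected_Ioi
    (fun t ht ↦ (hf t ht).differentiableAt.differentiableWithinAt)
    (fun t ht ↦ (hf t ht).deriv) hx hy

theorem eq_exp_mul_of_hasDerivAt_Ioi {f : ℝ → ℂ} {r : ℂ}
    (hf : ∀ x ∈ Ioi a, HasDerivAt f (r * f x) x) {x y : ℝ} (hx : x ∈ Ioi a)
    (hy : y ∈ Ioi a) : f y = exp (r * (y - x)) * f x := by
  have hg : ∀ t ∈ Ioi a, HasDerivAt (fun t : ℝ ↦ exp (-r * t) * f t) 0 t := fun t ht ↦ by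
    have he : HasDerivAt (fun t : ℝ ↦ exp (-r * t)) (exp (-r * t) * -r) t := by
      simpa using ((hasDerivAt_id (t : ℂ)).const_mul (-r)).cexp.comp_ofReal
    exact (he.mul (hf t ht)).congr_deriv (by ring)
  have h := congrArg (exp (r * y) * ·) (eq_of_hasDerivAt_zero_Ioi hg hy hx)
  simp only [← mul_assoc, ← Complex.exp_add] at h
  rwa [show r * y + -r * y = 0 by ring, show r * y + -r * x = r * (y - x) by ring, Complex.exp_zero,
    one_mul] at h

theorem SecondDerivEqMulOn.eqOn_zero_of_zero {φ φ' : ℝ → ℂ}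
    (h : SecondDerivEqMulOn 0 φ φ' (Ioi a)) (hint : IntegrableOn (fun x ↦ ‖φ x‖ ^ 2) (Ioi a)) :
    EqOn φ 0 (Ioi a) := by
  intro x₀ hx₀
  have hshift : ∀ x ∈ Ioi a, x + 1 ∈ Ioi a := fun x hx ↦ lt_add_of_lt_of_pos (mem_Ioi.1 hx) one_pos
  have hφ'_const : ∀ x ∈ Ioi a, φ' x = φ' x₀ := fun x hx ↦
    eq_of_hasDerivAt_zero_Ioi (fun t ht ↦ by simpa using (h t ht).2) hx hx₀
  have hstep : ∀ x ∈ Ioi a, φ (x + 1) = φ x + φ' x₀ := by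
    have hψ : ∀ t ∈ Ioi a, HasDerivAt (fun t : ℝ ↦ φ t - t * φ' x₀) 0 t := fun t ht ↦ by
      simpa [hφ'_const t ht] using
        (h t ht).1.fun_sub ((hasDerivAt_id t).ofReal_comp.mul_const (φ' x₀))
    intro x hx
    have := eq_of_hasDerivAt_zero_Ioi hψ (hshift x hx) hx
    push_cast at this
    linear_combination this
  have hslope : φ' x₀ = 0 := by
    suffices ‖φ' x₀‖ ^ 2 / 2 ≤ 0 from norm_eq_zero.1 <| (sq_nonpos_iff _).1 (by linarith)
    refine hint.nonpos_of_forall_le_add_comp_add zero_le_one fun x hx ↦ ?_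
    have := parallelogram_law_with_norm ℝ (φ (x + 1)) (φ x)
    rw [hstep x hx, add_sub_cancel_left] at this
    rw [hstep x hx]
    nlinarith [norm_nonneg (φ x + φ' x₀ + φ x)]
  have hconst : ∀ x ∈ Ioi a, φ x = φ x₀ := fun x hx ↦
    eq_of_hasDerivAt_zero_Ioi (fun t ht ↦ hslope ▸ hφ'_const t ht ▸ (h t ht).1) hx hx₀
  suffices 2 * ‖φ x₀‖ ^ 2 ≤ 0 from norm_eq_zero.1 <| (sq_nonpos_iff _).1 (by linarith)
  refine hint.nonpos_of_forall_le_add_comp_add zero_le_one fun x hx ↦ ?_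
  rw [hconst x hx, hconst (x + 1) (hshift x hx)]
  linarith

theorem SecondDerivEqMulOn.eqOn_zero_of_neg_sq {φ φ' : ℝ → ℂ} {k : ℝ} (hk : 0 < k)
    (h : SecondDerivEqMulOn (-k ^ 2) φ φ' (Ioi a))
    (hint : IntegrableOn (fun x ↦ ‖φ x‖ ^ 2) (Ioi a)) :
    EqOn φ 0 (Ioi a) := by
  intro x₀ hx₀
  set r : ℂ := k * I
  have hr2 : r ^ 2 = ((-k ^ 2 : ℝ) : ℂ) := by push_cast; simp [r, mul_pow]
  have hr_norm : ‖r‖ = k := by simp [r, abs_of_pos hk]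
  set u : ℝ → ℂ := fun x ↦ φ' x + r * φ x
  set v : ℝ → ℂ := fun x ↦ φ' x - r * φ x
  have hu : ∀ x ∈ Ioi a, HasDerivAt u (r * u x) x := fun x hx ↦
    ((h x hx).2.fun_add ((h x hx).1.const_mul r)).congr_deriv
      (by simp only [u]; linear_combination φ x * hr2.symm)
  have hv : ∀ x ∈ Ioi a, HasDerivAt v (-r * v x) x := fun x hx ↦
    ((h x hx).2.fun_sub ((h x hx).1.const_mul r)).congr_deriv
      (by simp only [v]; linear_combination φ x * hr2.symm)
  have hφ_uv : ∀ x, ‖φ x‖ = ‖u x - v x‖ / (2 * k) := fun x ↦ by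
    rw [show u x - v x = 2 * r * φ x by simp only [u, v]; ring, norm_mul, norm_mul, hr_norm]
    field_simp
    simp
  have hnorm_exp : ∀ t : ℝ, ‖exp (r * t)‖ = 1 ∧ ‖exp (-r * t)‖ = 1 := fun t ↦ by
    simp [r, norm_exp]
  set d := π / (2 * k)
  have hd : 0 < d := by positivity
  have hexp_d : exp (r * d) = I := by
    have hk' : (k : ℂ) ≠ 0 := ofReal_ne_zero.2 hk.ne'
    rw [show r * d = π / 2 * I by simp only [r, d]; push_cast; field_simp]
    simp
  have hexp_neg_d : exp (-r * d) = -I := by rw [neg_mul, Complex.exp_neg, hexp_d, inv_I]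
  have hlower : ∀ x ∈ Ioi a,
      (‖u x₀‖ ^ 2 + ‖v x₀‖ ^ 2) / (2 * k ^ 2) ≤ ‖φ x‖ ^ 2 + ‖φ (x + d)‖ ^ 2 := by
    intro x hx
    have hxd : x + d ∈ Ioi a := lt_add_of_lt_of_pos (mem_Ioi.1 hx) hd
    have hu_d : u (x + d) = I * u x := by
      rw [eq_exp_mul_of_hasDerivAt_Ioi hu hx hxd]; push_cast; rw [add_sub_cancel_left, hexp_d]
    have hv_d : v (x + d) = -I * v x := by
      rw [eq_exp_mul_of_hasDerivAt_Ioi hv hx hxd]; push_cast; rw [add_sub_cancel_left, hexp_neg_d]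
    have hu_x : ‖u x‖ = ‖u x₀‖ := by
      rw [eq_exp_mul_of_hasDerivAt_Ioi hu hx₀ hx, norm_mul, ← ofReal_sub, (hnorm_exp _).1, one_mul]
    have hv_x : ‖v x‖ = ‖v x₀‖ := by
      rw [eq_exp_mul_of_hasDerivAt_Ioi hv hx₀ hx, norm_mul, ← ofReal_sub, (hnorm_exp _).2, one_mul]
    have hquarter : ‖u (x + d) - v (x + d)‖ = ‖u x + v x‖ := by
      rw [hu_d, hv_d, show I * u x - -I * v x = I * (u x + v x) by ring, norm_mul, norm_I, one_mul]
    rw [hφ_uv, hφ_uv, hquarter, div_pow, div_pow, ← add_div, add_comm (‖u x - v x‖ ^ 2),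
      parallelogram_law_with_norm ℝ (u x) (v x), hu_x, hv_x]
    apply le_of_eq
    field_simp
  have hbound := hint.nonpos_of_forall_le_add_comp_add hd.le hlower
  rw [div_le_iff₀ (by positivity), zero_mul] at hbound
  have hu₀ : u x₀ = 0 := norm_eq_zero.1 <| (sq_nonpos_iff _).1 (by nlinarith [sq_nonneg ‖v x₀‖])
  have hv₀ : v x₀ = 0 := norm_eq_zero.1 <| (sq_nonpos_iff _).1 (by nlinarith [sq_nonneg ‖u x₀‖])
  simpa [hu₀, hv₀] using hφ_uv x₀

theorem SecondDerivEqMulOn.eqOn_zero_of_nonpos {c : ℝ} {φ φ' : ℝ → ℂ} (hc : c ≤ 0)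
    (h : SecondDerivEqMulOn c φ φ' (Ioi a)) (hint : IntegrableOn (fun x ↦ ‖φ x‖ ^ 2) (Ioi a)) :
    EqOn φ 0 (Ioi a) := by
  rcases hc.lt_or_eq with hc | rfl
  · have hk : c = -√(-c) ^ 2 := by rw [sq_sqrt (neg_nonneg.2 hc.le), neg_neg]
    rw [hk] at h
    exact h.eqOn_zero_of_neg_sq (sqrt_pos.2 (neg_pos.2 hc)) hint
  · exact h.eqOn_zero_of_zero hint

end HalfLine

theorem no_solitary_waves_high_frequency_general
    (m ω : ℝ) (hω : m ^ 2 ≤ ω ^ 2)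
    (φ : ℝ → ℂ) (hcont : Continuous φ)
    (hL2 : MeasureTheory.Integrable (fun x : ℝ => ‖φ x‖ ^ 2))
    (hODE : ∀ x : ℝ, x ≠ 0 →
      DifferentiableAt ℝ φ x ∧ DifferentiableAt ℝ (deriv φ) x ∧
      deriv (deriv φ) x = ((m ^ 2 - ω ^ 2 : ℝ) : ℂ) * φ x) :
    ∀ x : ℝ, φ x = 0 := by
  have hc : m ^ 2 - ω ^ 2 ≤ 0 := sub_nonpos.2 hω
  have hsol : SecondDerivEqMulOn (m ^ 2 - ω ^ 2) φ (deriv φ) {0}ᶜ := fun x hx ↦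
    ⟨(hODE x hx).1.hasDerivAt, (hODE x hx).2.2 ▸ (hODE x hx).2.1.hasDerivAt⟩
  have hright : EqOn φ 0 (Ioi 0) :=
    SecondDerivEqMulOn.eqOn_zero_of_nonpos hc (fun x hx ↦ hsol x (ne_of_gt hx))
      hL2.integrableOn
  have hleft : EqOn (fun x ↦ φ (-x)) 0 (Ioi 0) :=
    SecondDerivEqMulOn.eqOn_zero_of_nonpos hc
      (fun x hx ↦ hsol.comp_neg x (neg_ne_zero.2 (ne_of_gt hx))) hL2.comp_neg.integrableOn
  have hpunctured : EqOn φ 0 {0}ᶜ := fun x hx ↦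
    (lt_or_gt_of_ne hx).elim (fun h ↦ by simpa using hleft (neg_pos.2 h)) (fun h ↦ hright h)
  exact congrFun (hcont.ext_on (dense_compl_singleton 0) continuous_const hpunctured)

/-- Nonexistence of nonzero solitary waves for `|ω| ≥ m`:
if `φ : ℝ → ℂ` is continuous, square-integrable over `ℝ`, and away from the origin
is twice differentiable with `φ'' = (m² − ω²)·φ` where `ω² ≥ m²`, then `φ ≡ 0`. -/
theorem no_solitary_waves_high_frequency
    (m ω : ℝ) (hm : 0 < m) (hω : m ^ 2 ≤ ω ^ 2)
    (φ : ℝ → ℂ) (hcont : Continuous φ)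
    (hL2 : MeasureTheory.Integrable (fun x : ℝ => ‖φ x‖ ^ 2))
    (hODE : ∀ x : ℝ, x ≠ 0 →
      DifferentiableAt ℝ φ x ∧ DifferentiableAt ℝ (deriv φ) x ∧
      deriv (deriv φ) x = ((m ^ 2 - ω ^ 2 : ℝ) : ℂ) * φ x) :
    ∀ x : ℝ, φ x = 0 :=
  no_solitary_waves_high_frequency_general m ω hω φ hcont hL2 hODE
end

section
/- Let m > 0 and ω ∈ ℝ with |ω| > m. Suppose that for each ε > 0, k(ε) ∈ ℂ satisfies k(ε)² = (ω + iε)² − m² and Im k(ε) > 0. Then the limit as ε → 0⁺ of ε·∫_ℝ |e^{i·k(ε)·|x|}|² dx (equivalently, of ε/Im k(ε)) exists and equals √(ω² − m²)/|ω|. -/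
/-!
Write `k = a + ib` with `b > 0`. Then `‖e^{ik|x|}‖² = e^{-2b|x|}`, whose integral is `1/b`, so the
quantity is `ε/b`. The imaginary part of `k² = (ω+iε)² − m²` gives `ab = ωε`, hence
`ε/b = |a|/|ω|`, and `|a| = √((‖k²‖ + Re k²)/2)` depends continuously on `ε`, with value
`√(ω² − m²)` at `ε = 0`.
-/

open MeasureTheory Filter Topology

namespace Complex

theorem re_sq_eq_half_norm_sq_add_re_sq (z : ℂ) : z.re ^ 2 = (‖z ^ 2‖ + (z ^ 2).re) / 2 := by
  rw [norm_pow, Complex.sq_norm, normSq_apply, sq z, mul_re]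
  ring

theorem abs_re_eq_sqrt (z : ℂ) : |z.re| = √((‖z ^ 2‖ + (z ^ 2).re) / 2) := by
  rw [← re_sq_eq_half_norm_sq_add_re_sq, Real.sqrt_sq_eq_abs]

end Complex

theorem integral_exp_neg_mul_abs {b : ℝ} (hb : 0 < b) :
    ∫ x : ℝ, Real.exp (-b * |x|) = 2 / b := by
  rw [integral_comp_abs (f := fun x ↦ Real.exp (-b * x)), integral_exp_mul_Ioi (by linarith) 0,
    mul_zero, Real.exp_zero]
  field_simp

theorem integral_norm_exp_I_mul_abs_sq {k : ℂ} (hk : 0 < k.im) :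
    ∫ x : ℝ, ‖Complex.exp (Complex.I * k * |x|)‖ ^ 2 = 1 / k.im := by
  have hnorm (x : ℝ) :
      ‖Complex.exp (Complex.I * k * |x|)‖ ^ 2 = Real.exp (-(2 * k.im) * |x|) := by
    rw [Complex.norm_exp, ← Real.exp_nat_mul, Complex.re_mul_ofReal, Complex.I_mul_re]
    congr 1
    push_cast
    ring
  simp_rw [hnorm, integral_exp_neg_mul_abs (by positivity : 0 < 2 * k.im)]
  field_simp

theorem div_im_eq_abs_re_div_abs {k : ℂ} {ω ε : ℝ} (hk : (k ^ 2).im = 2 * ω * ε)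
    (him : 0 < k.im) (hε : 0 < ε) (hω : ω ≠ 0) : ε / k.im = |k.re| / |ω| := by
  have hprod : k.re * k.im = ω * ε := by rw [sq, Complex.mul_im] at hk; linarith
  have hdiv : ε / k.im = k.re / ω := by rw [div_eq_div_iff him.ne' hω]; linarith
  rw [← abs_div, ← hdiv, abs_of_pos (by positivity)]

/-- Part (i) of the key lemma of the Paley–Wiener argument: for `|ω| > m` and
`k(ε)` the root of `k² = (ω+iε)² − m²` with positive imaginary part,
`ε·∫_ℝ |e^{i k(ε)|x|}|² dx → √(ω² − m²)/|ω|` as `ε → 0⁺`. -/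
theorem limit_of_weighted_L2_norm
    (m ω : ℝ) (hm : 0 < m) (hω : m < |ω|)
    (k : ℝ → ℂ)
    (hk : ∀ ε : ℝ, 0 < ε →
      (k ε) ^ 2 = ((ω : ℂ) + Complex.I * (ε : ℂ)) ^ 2 - (m : ℂ) ^ 2 ∧ 0 < (k ε).im) :
    Tendsto
      (fun ε : ℝ =>
        ε * ∫ x : ℝ, ‖Complex.exp (Complex.I * k ε * ((|x| : ℝ) : ℂ))‖ ^ 2)
      (nhdsWithin 0 (Set.Ioi 0))
      (nhds (Real.sqrt (ω ^ 2 - m ^ 2) / |ω|)) := by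
  have hω0 : ω ≠ 0 := by rintro rfl; rw [abs_zero] at hω; linarith
  have hD : 0 ≤ ω ^ 2 - m ^ 2 := by nlinarith [sq_abs ω]
  set w : ℝ → ℂ := fun ε ↦ ((ω : ℂ) + Complex.I * ε) ^ 2 - (m : ℂ) ^ 2
  have hw0 : w 0 = ((ω ^ 2 - m ^ 2 : ℝ) : ℂ) := by simp [w]
  have hlim : Tendsto (fun ε ↦ √((‖w ε‖ + (w ε).re) / 2) / |ω|) (𝓝[>] 0)
      (𝓝 (√(ω ^ 2 - m ^ 2) / |ω|)) := by
    have hcont : Continuous fun ε ↦ √((‖w ε‖ + (w ε).re) / 2) / |ω| := by fun_prop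
    have := hcont.tendsto 0
    simp only [hw0, Complex.norm_real, Complex.ofReal_re, Real.norm_of_nonneg hD,
      add_self_div_two] at this
    exact this.mono_left nhdsWithin_le_nhds
  refine hlim.congr' ?_
  filter_upwards [self_mem_nhdsWithin] with ε (hε : 0 < ε)
  obtain ⟨hsq, him⟩ := hk ε hε
  have him_sq : (k ε ^ 2).im = 2 * ω * ε := by
    simp only [hsq, sq, Complex.sub_im, Complex.mul_im, Complex.mul_re, Complex.add_re,
      Complex.add_im, Complex.ofReal_re, Complex.ofReal_im, Complex.I_re, Complex.I_im]
    ring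
  rw [integral_norm_exp_I_mul_abs_sq him, mul_one_div,
    div_im_eq_abs_re_div_abs him_sq him hε hω0, Complex.abs_re_eq_sqrt, hsq]
end

section
/- Let m > 0 and L > π/(2^{3/2}·m), and set ω = √(π²/L² + m²)/3. Then 0 < ω < m and m < 3ω < 3m. Moreover, setting κ = √(m² − ω²), for every α, β ∈ ℝ satisfying (2κ/(1 + e^{−κL}) − α)·β > 0 there exist A, B ∈ ℝ with A ≠ 0 such that: (i) 2κ = α·(1 + e^{−κL}) + (3/4)·β·A²·(1 + e^{−κL})³; and (ii) B·(π/L) = (1/4)·β·A³·(1 + e^{−κL})³. -/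
/-!
The wide-gap condition `π/(2^{3/2} m) < L` is exactly `π²/L² < 8m²`, i.e.
`(3ω)² = π²/L² + m² < 9m²`, so `ω < m` while `3ω > m` lies in the continuous spectrum.
The first jump equation is linear in `A²`, and the sign condition says precisely that the
value it forces for `A²` is positive; the second equation then determines `B`, as `π/L ≠ 0`.
-/

open Real

lemma sq_div_sq_lt_eight_mul_sq {a m L : ℝ} (ha : 0 < a) (hm : 0 < m)
    (h : a / (2 ^ ((3 : ℝ) / 2) * m) < L) : a ^ 2 / L ^ 2 < 8 * m ^ 2 := by
  have hc : (0 : ℝ) < 2 ^ ((3 : ℝ) / 2) * m := by positivity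
  have hc_sq : (2 ^ ((3 : ℝ) / 2) * m) ^ 2 = 8 * m ^ 2 := by
    rw [mul_pow, ← rpow_natCast, ← rpow_mul (by norm_num)]
    norm_num
  have hL : 0 < L := (div_pos ha hc).trans h
  rw [div_lt_iff₀ hc] at h
  rw [div_lt_iff₀ (by positivity), ← hc_sq, ← mul_pow, mul_comm]
  exact pow_lt_pow_left₀ h ha.le two_ne_zero

lemma lt_sqrt_add_sq_lt_three_mul {p m : ℝ} (hm : 0 < m) (hp : 0 < p) (hp8 : p < 8 * m ^ 2) :
    m < √(p + m ^ 2) ∧ √(p + m ^ 2) < 3 * m := by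
  constructor
  · rw [lt_sqrt hm.le]
    linarith
  · rw [sqrt_lt' (by positivity)]
    linarith

lemma exists_ne_zero_eq_mul_sq {a b : ℝ} (h : 0 < a * b) : ∃ A : ℝ, A ≠ 0 ∧ a = b * A ^ 2 := by
  have hb : b ≠ 0 := by rintro rfl; simp at h
  have hab : 0 < a / b := by
    rw [← mul_div_mul_right a b hb, ← sq]
    exact div_pos h (by positivity)
  refine ⟨√(a / b), (sqrt_pos.mpr hab).ne', ?_⟩
  rw [sq_sqrt hab.le]
  field_simp

lemma exists_jump_amplitudes {κ α β E ℓ : ℝ} (hE : 0 < E) (hℓ : ℓ ≠ 0)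
    (h : (2 * κ / E - α) * β > 0) :
    ∃ A B : ℝ, A ≠ 0 ∧ 2 * κ = α * E + (3 / 4) * β * A ^ 2 * E ^ 3 ∧
      B * ℓ = (1 / 4) * β * A ^ 3 * E ^ 3 := by
  have hsign : 0 < (2 * κ - α * E) * ((3 / 4) * β * E ^ 3) := by
    have : (2 * κ - α * E) * ((3 / 4) * β * E ^ 3) = ((2 * κ / E - α) * β) * (3 / 4 * E ^ 4) := by
      field_simp
    rw [this]
    exact mul_pos h (by positivity)
  obtain ⟨A, hA, hA_sq⟩ := exists_ne_zero_eq_mul_sq hsign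
  refine ⟨A, (1 / 4) * β * A ^ 3 * E ^ 3 / ℓ, hA, by linarith, div_mul_cancel₀ _ hℓ⟩

theorem multifrequency_wide_gaps_general
    (m L : ℝ) (hm : 0 < m) (hL : Real.pi / (2 ^ ((3 : ℝ) / 2) * m) < L)
    (ω : ℝ) (hω : ω = Real.sqrt (Real.pi ^ 2 / L ^ 2 + m ^ 2) / 3)
    (κ : ℝ) :
    (0 < ω ∧ ω < m) ∧ (m < 3 * ω ∧ 3 * ω < 3 * m) ∧
    ∀ α β : ℝ, (2 * κ / (1 + Real.exp (-(κ * L))) - α) * β > 0 →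
      ∃ A B : ℝ, A ≠ 0 ∧
        2 * κ = α * (1 + Real.exp (-(κ * L)))
          + (3 / 4) * β * A ^ 2 * (1 + Real.exp (-(κ * L))) ^ 3 ∧
        B * (Real.pi / L) = (1 / 4) * β * A ^ 3 * (1 + Real.exp (-(κ * L))) ^ 3 := by
  have hL0 : 0 < L := (div_pos pi_pos (by positivity)).trans hL
  obtain ⟨hm_lt, hlt_3m⟩ := lt_sqrt_add_sq_lt_three_mul hm (by positivity)
    (sq_div_sq_lt_eight_mul_sq pi_pos hm hL)
  subst hω
  refine ⟨⟨by linarith, by linarith⟩, ⟨by linarith, by linarith⟩, fun α β h => ?_⟩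
  exact exists_jump_amplitudes (by positivity) (div_ne_zero pi_ne_zero hL0.ne') h

/-- Wide gaps: for `L > π/(2^{3/2} m)` and `ω = √(π²/L² + m²)/3` one has
`0 < ω < m` and `m < 3ω < 3m`; moreover, with `κ = √(m²−ω²)`, for all `α, β`
with `(2κ/(1+e^{−κL}) − α)·β > 0` the jump-condition system producing a
two-frequency solitary wave is solvable with `A ≠ 0`. -/
theorem multifrequency_wide_gaps
    (m L : ℝ) (hm : 0 < m) (hL : Real.pi / (2 ^ ((3 : ℝ) / 2) * m) < L)
    (ω : ℝ) (hω : ω = Real.sqrt (Real.pi ^ 2 / L ^ 2 + m ^ 2) / 3)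
    (κ : ℝ) (hκ : κ = Real.sqrt (m ^ 2 - ω ^ 2)) :
    (0 < ω ∧ ω < m) ∧ (m < 3 * ω ∧ 3 * ω < 3 * m) ∧
    ∀ α β : ℝ, (2 * κ / (1 + Real.exp (-(κ * L))) - α) * β > 0 →
      ∃ A B : ℝ, A ≠ 0 ∧
        2 * κ = α * (1 + Real.exp (-(κ * L)))
          + (3 / 4) * β * A ^ 2 * (1 + Real.exp (-(κ * L))) ^ 3 ∧
        B * (Real.pi / L) = (1 / 4) * β * A ^ 3 * (1 + Real.exp (-(κ * L))) ^ 3 :=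
  multifrequency_wide_gaps_general m L hm hL ω hω κ
end
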